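/- Let 0 < α < 1 and 0 < ν < α, and define h(t) = max{|t|^ν - 1, 0}. Then there is a constant c depending only on α and ν such that for all t ∈ ℝ with t ≤ 0, the rescaled Caputo derivative from -∞, given by α ∫_{-∞}^{t} (h(t) - h(s))/(t-s)^{1+α} ds, is bounded below by -c. Equivalently, ∫_{-∞}^{t} ν |s|^{ν-1} (t-s)^{-α} ds ≤ c for all t ≤ 0, where the integrand is supported on s ≤ -1 (since h' = 0 on (-1,1) and we consider t ≤ 0). -/

import Mathlib

/-!
For `s < t ≤ 0` the increment `h s - h t` is nonnegative and bounded both by `ν (t - s)`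
(on `|x| ≥ 1` the slope of `|x| ^ ν` is at most `ν`) and by `(t - s) ^ ν` (subadditivity of
`x ↦ x ^ ν`). Using the first bound for `t - s ≤ 1` and the second for `t - s > 1`, the integrand
is dominated by a function of `t - s` whose integral `ν / (1 - α) + 1 / (α - ν)` is finite
precisely because `α < 1` and `ν < α`.
-/
open Real MeasureTheory Set

namespace Real

lemma rpow_sub_rpow_le_mul_sub {p a b : ℝ} (hp0 : 0 ≤ p) (hp1 : p ≤ 1) (hb : 1 ≤ b)
    (hba : b ≤ a) : a ^ p - b ^ p ≤ p * (a - b) := by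
  rcases hba.eq_or_lt with rfl | hba
  · simp
  have hb0 : (0 : ℝ) < b := one_pos.trans_le hb
  have hslope : slope (· ^ p) b a ≤ p * b ^ (p - 1) :=
    (concaveOn_rpow hp0 hp1).slope_le_of_hasDerivAt hb0.le (hb0.trans hba).le hba
      (hasDerivAt_rpow_const (Or.inl hb0.ne'))
  have hder : p * b ^ (p - 1) ≤ p :=
    mul_le_of_le_one_right hp0 (rpow_le_one_of_one_le_of_nonpos hb (by linarith))
  rw [slope_def_field, div_le_iff₀ (sub_pos.2 hba)] at hslope
  nlinarith [sub_pos.2 hba]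

lemma rpow_sub_rpow_le_rpow_sub {p a b : ℝ} (hp0 : 0 ≤ p) (hp1 : p ≤ 1) (hb : 0 ≤ b)
    (hba : b ≤ a) : a ^ p - b ^ p ≤ (a - b) ^ p := by
  have := rpow_add_le_add_rpow hb (sub_nonneg.2 hba) hp0 hp1
  rw [add_sub_cancel] at this
  linarith

end Real

lemma max_rpow_sub_one_zero {p x : ℝ} (hp : 0 ≤ p) (hx : 0 ≤ x) :
    max (x ^ p - 1) 0 = max x 1 ^ p - 1 := by
  rcases le_total x 1 with hx1 | hx1
  · rw [max_eq_right hx1, one_rpow, sub_self]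
    exact max_eq_right (sub_nonpos.2 (rpow_le_one hx hx1 hp))
  · rw [max_eq_left hx1]
    exact max_eq_left (sub_nonneg.2 (one_le_rpow hx1 hp))

lemma max_rpow_sub_one_zero_sub_le {p x y : ℝ} (hp0 : 0 ≤ p) (hp1 : p ≤ 1) (hy : 0 ≤ y)
    (hyx : y ≤ x) :
    max (x ^ p - 1) 0 - max (y ^ p - 1) 0 ≤ min (p * (x - y)) ((x - y) ^ p) := by
  rw [max_rpow_sub_one_zero hp0 (hy.trans hyx), max_rpow_sub_one_zero hp0 hy,
    sub_sub_sub_cancel_right]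
  have hb : 1 ≤ max y 1 := le_max_right _ _
  have hba : max y 1 ≤ max x 1 := max_le_max_right 1 hyx
  have hgap : max x 1 - max y 1 ≤ x - y := by
    simpa [sub_nonneg.2 hyx] using max_sub_max_le_max x 1 y 1
  refine le_min ?_ ?_
  · exact (Real.rpow_sub_rpow_le_mul_sub hp0 hp1 hb hba).trans (by gcongr)
  · exact (Real.rpow_sub_rpow_le_rpow_sub hp0 hp1 (zero_le_one.trans hb) hba).trans
      (by gcongr)

noncomputable def caputoMajorant (α ν : ℝ) : ℝ → ℝ :=
  (Ioc 0 1).indicator (fun r ↦ ν * r ^ (-α)) + (Ioi 1).indicator (fun r ↦ r ^ (ν - 1 - α))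

section caputoMajorant

variable {α ν : ℝ}

lemma caputoMajorant_nonneg (hν : 0 ≤ ν) (r : ℝ) : 0 ≤ caputoMajorant α ν r := by
  refine add_nonneg (indicator_nonneg (fun r hr ↦ ?_) r) (indicator_nonneg (fun r hr ↦ ?_) r)
  · exact mul_nonneg hν (rpow_nonneg hr.1.le _)
  · exact rpow_nonneg (zero_le_one.trans hr.out.le) _

lemma integrableOn_Ioc_zero_one_rpow (hα : α < 1) :
    IntegrableOn (fun r : ℝ ↦ r ^ (-α)) (Ioc 0 1) :=
  (intervalIntegrable_iff_integrableOn_Ioc_of_le zero_le_one).1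
    (intervalIntegral.intervalIntegrable_rpow' (by linarith))

lemma integrable_caputoMajorant (hα : α < 1) (hνα : ν < α) : Integrable (caputoMajorant α ν) :=
  (IntegrableOn.integrable_indicator ((integrableOn_Ioc_zero_one_rpow hα).const_mul ν)
    measurableSet_Ioc).add
    ((integrableOn_Ioi_rpow_of_lt (by linarith) one_pos).integrable_indicator measurableSet_Ioi)

lemma integral_caputoMajorant (hα : α < 1) (hνα : ν < α) :
    ∫ r, caputoMajorant α ν r = ν / (1 - α) + 1 / (α - ν) := by
  rw [caputoMajorant, Pi.add_def, integral_add
      (IntegrableOn.integrable_indicator ((integrableOn_Ioc_zero_one_rpow hα).const_mul ν)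
        measurableSet_Ioc)
      ((integrableOn_Ioi_rpow_of_lt (by linarith) one_pos).integrable_indicator measurableSet_Ioi),
    integral_indicator measurableSet_Ioc, integral_indicator measurableSet_Ioi,
    ← intervalIntegral.integral_of_le zero_le_one, intervalIntegral.integral_const_mul,
    integral_rpow (Or.inl (by linarith)), integral_Ioi_rpow_of_lt (by linarith) one_pos,
    one_rpow, one_rpow, zero_rpow (by linarith)]
  have h1 : -α + 1 ≠ 0 := by linarith
  have h2 : ν - 1 - α + 1 ≠ 0 := by linarith
  have h3 : 1 - α ≠ 0 := by linarith
  have h4 : α - ν ≠ 0 := by linarith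
  field_simp
  ring

lemma mul_rpow_le_caputoMajorant {r d : ℝ} (hr : 0 < r) (hlip : d ≤ ν * r) (hhol : d ≤ r ^ ν) :
    d * r ^ (-(1 + α)) ≤ caputoMajorant α ν r := by
  rcases le_or_gt r 1 with hr1 | hr1
  · have : caputoMajorant α ν r = ν * r ^ (-α) := by
      simp [caputoMajorant, hr, hr1, not_lt.2 hr1]
    calc d * r ^ (-(1 + α)) ≤ ν * r * r ^ (-(1 + α)) := by gcongr
      _ = ν * r ^ (-α) := by
        rw [mul_assoc, mul_comm r, ← rpow_add_one hr.ne']; ring_nf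
      _ = _ := this.symm
  · have : caputoMajorant α ν r = r ^ (ν - 1 - α) := by
      simp [caputoMajorant, hr1, not_le.2 hr1]
    calc d * r ^ (-(1 + α)) ≤ r ^ ν * r ^ (-(1 + α)) := by gcongr
      _ = r ^ (ν - 1 - α) := by rw [← rpow_add hr]; ring_nf
      _ = _ := this.symm

lemma setIntegral_Iio_le_integral_caputoMajorant (hν : 0 ≤ ν) (hα : α < 1) (hνα : ν < α)
    (t : ℝ) {g : ℝ → ℝ} (hg0 : ∀ s < t, 0 ≤ g s)
    (hg : ∀ s < t, g s ≤ caputoMajorant α ν (t - s)) :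
    ∫ s in Iio t, g s ≤ ∫ r, caputoMajorant α ν r := by
  have hint : Integrable (fun s ↦ caputoMajorant α ν (t - s)) :=
    (integrable_caputoMajorant hα hνα).comp_sub_left t
  calc ∫ s in Iio t, g s ≤ ∫ s in Iio t, caputoMajorant α ν (t - s) :=
        integral_mono_of_nonneg (ae_restrict_of_forall_mem measurableSet_Iio hg0)
          hint.integrableOn (ae_restrict_of_forall_mem measurableSet_Iio hg)
    _ ≤ ∫ s, caputoMajorant α ν (t - s) :=
        setIntegral_le_integral hint (ae_of_all _ fun s ↦ caputoMajorant_nonneg hν _)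
    _ = ∫ r, caputoMajorant α ν r := integral_sub_left_eq_self _ _ t

end caputoMajorant

theorem stmt_4 (α ν : ℝ) (hα : α ∈ Set.Ioo (0:ℝ) 1) (hν : 0 < ν) (hνα : ν < α)
    (h : ℝ → ℝ) (hh : ∀ t, h t = max (|t| ^ ν - 1) 0) :
    ∃ c : ℝ, 0 < c ∧ ∀ t ≤ (0:ℝ),
      -c ≤ α * ∫ s in Set.Iio t, (h t - h s) * (t - s) ^ (-(1+α)) := by
  obtain ⟨hα0, hα1⟩ := hα
  have hν1 : ν ≤ 1 := (hνα.trans hα1).le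
  refine ⟨α * (ν / (1 - α) + 1 / (α - ν)),
    mul_pos hα0 (add_pos (div_pos hν (by linarith)) (one_div_pos.2 (by linarith))), fun t ht ↦ ?_⟩
  have hincr : ∀ s < t, 0 ≤ h s - h t ∧ h s - h t ≤ min (ν * (t - s)) ((t - s) ^ ν) := by
    intro s hs
    have hyx : -t ≤ -s := by linarith
    rw [hh, hh, abs_of_nonpos ht, abs_of_nonpos (hs.le.trans ht), ← neg_sub_neg s t]
    exact ⟨sub_nonneg.2 (by gcongr; linarith),
      max_rpow_sub_one_zero_sub_le hν.le hν1 (by linarith) hyx⟩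
  have hbound : ∫ s in Iio t, (h s - h t) * (t - s) ^ (-(1 + α)) ≤ ν / (1 - α) + 1 / (α - ν) := by
    rw [← integral_caputoMajorant hα1 hνα]
    refine setIntegral_Iio_le_integral_caputoMajorant hν.le hα1 hνα t (fun s hs ↦ ?_) fun s hs ↦ ?_
    · exact mul_nonneg (hincr s hs).1 (rpow_nonneg (by linarith) _)
    · exact mul_rpow_le_caputoMajorant (by linarith) ((hincr s hs).2.trans (min_le_left _ _))
        ((hincr s hs).2.trans (min_le_right _ _))
  have hneg : ∫ s in Iio t, (h t - h s) * (t - s) ^ (-(1 + α))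
      = -∫ s in Iio t, (h s - h t) * (t - s) ^ (-(1 + α)) := by
    rw [← integral_neg]; simp only [← neg_mul, neg_sub]
  rw [hneg, mul_neg, neg_le_neg_iff]
  exact mul_le_mul_of_nonneg_left hbound hα0.le
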